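/- arXiv:2503.02684 — 4 statements merged into one kernel-verified Lean document; each statement's English description precedes it below -/
import Mathlib

section
/- Let p = (0,0,0,σ₊,σ₋) with σ₊² + σ₋² = 1. Then the total derivative DX(p) of the Wainwright–Hsu vector field at p has the following eigenstructure: DX(p)e_{N₁} = (2-4σ₊)e_{N₁}, DX(p)e_{N₂} = (2+2σ₊+2√3σ₋)e_{N₂}, DX(p)e_{N₃} = (2+2σ₊-2√3σ₋)e_{N₃}, DX(p)(-σ₋ e_{Σ₊} + σ₊ e_{Σ₋}) = 0, and DX(p)(σ₊ e_{Σ₊} + σ₋ e_{Σ₋}) = 3(2-γ)(σ₊ e_{Σ₊} + σ₋ e_{Σ₋}); in particular the eigenvalues of DX(p) are 2-4σ₊, 2+2σ₊+2√3σ₋, 2+2σ₊-2√3σ₋, 0, and 3(2-γ). -/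
/-! At a point `p` with `N = 0` every term of the field is a product with a factor vanishing at `p`,
so the product rule keeps only the derivative of that factor: the quadratic terms `K`, `S₊`, `S₋`
have zero derivative, `N_i' = (q - …) N_i` linearizes to `(q(p) - …) dN_i`, and
`Σ' = (q - 2) Σ - 3 S` to `σ ⊗ dq`. On the Kasner circle `q(p) = 2` and
`dq = 3(2 - γ)⟨σ, dΣ⟩`, so the `Σ`-block is the rank-one map `3(2 - γ) σσᵀ`, which kills the
tangent `σ^⊥` and scales `σ` by `3(2 - γ)|σ|² = 3(2 - γ)`. -/

/-- The vacuum Wainwright–Hsu vector field on `ℝ⁵` in the variables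
`(N₁, N₂, N₃, Σ₊, Σ₋)`, with matter parameter `γ`. -/
noncomputable def wainwrightHsu (γ : ℝ) (x : Fin 5 → ℝ) : Fin 5 → ℝ :=
  let N1 := x 0
  let N2 := x 1
  let N3 := x 2
  let Sp := x 3
  let Sm := x 4
  let K : ℝ := (3 / 4) * (N1 ^ 2 + N2 ^ 2 + N3 ^ 2
      - 2 * (N1 * N2 + N2 * N3 + N3 * N1))
  let Splus : ℝ := (1 / 2) * ((N2 - N3) ^ 2 - N1 * (2 * N1 - N2 - N3))
  let Sminus : ℝ := (Real.sqrt 3 / 2) * (N3 - N2) * (N1 - N2 - N3)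
  let Ω : ℝ := 1 - Sp ^ 2 - Sm ^ 2 - K
  let q : ℝ := 2 * (Sp ^ 2 + Sm ^ 2) + (1 / 2) * (3 * γ - 2) * Ω
  ![(q - 4 * Sp) * N1,
    (q + 2 * Sp + 2 * Real.sqrt 3 * Sm) * N2,
    (q + 2 * Sp - 2 * Real.sqrt 3 * Sm) * N3,
    (q - 2) * Sp - 3 * Splus,
    (q - 2) * Sm - 3 * Sminus]

/-- Standard basis vector of `ℝ⁵`. -/
noncomputable def e (i : Fin 5) : Fin 5 → ℝ := Pi.single i 1

section ProductRule

variable {𝕜 E 𝔸 : Type*} [NontriviallyNormedField 𝕜] [NormedAddCommGroup E] [NormedSpace 𝕜 E]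
  [NormedCommRing 𝔸] [NormedAlgebra 𝕜 𝔸] {c d : E → 𝔸} {c' d' : E →L[𝕜] 𝔸} {x : E}

theorem HasFDerivAt.mul_of_right_eq_zero (hc : HasFDerivAt c c' x) (hd : HasFDerivAt d d' x)
    (hdx : d x = 0) : HasFDerivAt (fun y => c y * d y) (c x • d') x :=
  (hc.fun_mul hd).congr_fderiv (by ext; simp [hdx])

theorem HasFDerivAt.mul_of_left_eq_zero (hc : HasFDerivAt c c' x) (hd : HasFDerivAt d d' x)
    (hcx : c x = 0) : HasFDerivAt (fun y => c y * d y) (d x • c') x :=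
  (hc.fun_mul hd).congr_fderiv (by ext; simp [hcx])

theorem HasFDerivAt.mul_of_eq_zero (hc : HasFDerivAt c c' x) (hd : HasFDerivAt d d' x)
    (hcx : c x = 0) (hdx : d x = 0) : HasFDerivAt (fun y => c y * d y) (0 : E →L[𝕜] 𝔸) x :=
  (hc.mul_of_right_eq_zero hd hdx).congr_fderiv (by ext; simp [hcx])

end ProductRule

theorem Module.End.hasEigenvalue_of_apply_eq_smul {R M : Type*} [CommRing R] [AddCommGroup M]
    [Module R M] {f : Module.End R M} {μ : R} {v : M} (hv : f v = μ • v) (hv₀ : v ≠ 0) :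
    f.HasEigenvalue μ :=
  Module.End.hasEigenvalue_of_hasEigenvector ⟨Module.End.mem_eigenspace_iff.mpr hv, hv₀⟩

namespace WainwrightHsu

open ContinuousLinearMap

/- The paper's `K`, `S₊`, `S₋` and `q`. -/
noncomputable def curv (x : Fin 5 → ℝ) : ℝ :=
  (3 / 4) * (x 0 ^ 2 + x 1 ^ 2 + x 2 ^ 2 - 2 * (x 0 * x 1 + x 1 * x 2 + x 2 * x 0))

noncomputable def sPlus (x : Fin 5 → ℝ) : ℝ :=
  (1 / 2) * ((x 1 - x 2) ^ 2 - x 0 * (2 * x 0 - x 1 - x 2))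

noncomputable def sMinus (x : Fin 5 → ℝ) : ℝ :=
  (Real.sqrt 3 / 2) * (x 2 - x 1) * (x 0 - x 1 - x 2)

noncomputable def decel (γ : ℝ) (x : Fin 5 → ℝ) : ℝ :=
  2 * (x 3 ^ 2 + x 4 ^ 2) + (1 / 2) * (3 * γ - 2) * (1 - x 3 ^ 2 - x 4 ^ 2 - curv x)

theorem wainwrightHsu_eq (γ : ℝ) :
    wainwrightHsu γ = fun x =>
      ![(decel γ x - 4 * x 3) * x 0,
        (decel γ x + 2 * x 3 + 2 * Real.sqrt 3 * x 4) * x 1,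
        (decel γ x + 2 * x 3 - 2 * Real.sqrt 3 * x 4) * x 2,
        (decel γ x - 2) * x 3 - 3 * sPlus x,
        (decel γ x - 2) * x 4 - 3 * sMinus x] :=
  rfl

variable (γ a b : ℝ)

theorem hasFDerivAt_coord (i : Fin 5) :
    HasFDerivAt (fun x : Fin 5 → ℝ => x i) (proj i : (Fin 5 → ℝ) →L[ℝ] ℝ) ![0, 0, 0, a, b] :=
  hasFDerivAt_apply i _

theorem hasFDerivAt_coord_mul_coord {i j : Fin 5} (hi : (![0, 0, 0, a, b] : Fin 5 → ℝ) i = 0)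
    (hj : (![0, 0, 0, a, b] : Fin 5 → ℝ) j = 0) :
    HasFDerivAt (fun x : Fin 5 → ℝ => x i * x j) (0 : (Fin 5 → ℝ) →L[ℝ] ℝ) ![0, 0, 0, a, b] :=
  (hasFDerivAt_coord a b i).mul_of_eq_zero (hasFDerivAt_coord a b j) hi hj

theorem hasFDerivAt_curv : HasFDerivAt curv (0 : (Fin 5 → ℝ) →L[ℝ] ℝ) ![0, 0, 0, a, b] := by
  have h : curv = fun x => (3 / 4) * (x 0 * x 0 + x 1 * x 1 + x 2 * x 2
      - 2 * (x 0 * x 1 + x 1 * x 2 + x 2 * x 0)) := by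
    funext x; simp only [curv]; ring
  rw [h]
  have h00 := hasFDerivAt_coord_mul_coord a b (i := 0) (j := 0) rfl rfl
  have h11 := hasFDerivAt_coord_mul_coord a b (i := 1) (j := 1) rfl rfl
  have h22 := hasFDerivAt_coord_mul_coord a b (i := 2) (j := 2) rfl rfl
  have h01 := hasFDerivAt_coord_mul_coord a b (i := 0) (j := 1) rfl rfl
  have h12 := hasFDerivAt_coord_mul_coord a b (i := 1) (j := 2) rfl rfl
  have h20 := hasFDerivAt_coord_mul_coord a b (i := 2) (j := 0) rfl rfl
  exact ((((h00.add h11).add h22).sub (((h01.add h12).add h20).const_mul 2)).const_mul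
    (3 / 4)).congr_fderiv (by simp)

theorem hasFDerivAt_sPlus : HasFDerivAt sPlus (0 : (Fin 5 → ℝ) →L[ℝ] ℝ) ![0, 0, 0, a, b] := by
  have h : sPlus = fun x =>
      (1 / 2) * ((x 1 - x 2) * (x 1 - x 2) - x 0 * (2 * x 0 - x 1 - x 2)) := by
    funext x; simp only [sPlus]; ring
  rw [h]
  have h12 := (hasFDerivAt_coord a b 1).sub (hasFDerivAt_coord a b 2)
  have h012 := (((hasFDerivAt_coord a b 0).const_mul 2).sub (hasFDerivAt_coord a b 1)).sub
    (hasFDerivAt_coord a b 2)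
  exact ((h12.mul_of_eq_zero h12 (by simp) (by simp)).sub
    ((hasFDerivAt_coord a b 0).mul_of_eq_zero h012 rfl (by simp))).const_mul (1 / 2)
    |>.congr_fderiv (by simp)

theorem hasFDerivAt_sMinus : HasFDerivAt sMinus (0 : (Fin 5 → ℝ) →L[ℝ] ℝ) ![0, 0, 0, a, b] := by
  have h : sMinus = fun x => (Real.sqrt 3 / 2) * ((x 2 - x 1) * (x 0 - x 1 - x 2)) := by
    funext x; simp only [sMinus]; ring
  rw [h]
  have h21 := (hasFDerivAt_coord a b 2).sub (hasFDerivAt_coord a b 1)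
  have h012 := ((hasFDerivAt_coord a b 0).sub (hasFDerivAt_coord a b 1)).sub
    (hasFDerivAt_coord a b 2)
  exact (h21.mul_of_eq_zero h012 (by simp) (by simp)).const_mul (Real.sqrt 3 / 2)
    |>.congr_fderiv (by simp)

theorem hasFDerivAt_decel :
    HasFDerivAt (decel γ) ((3 * (2 - γ)) • (a • proj 3 + b • proj 4) : (Fin 5 → ℝ) →L[ℝ] ℝ)
      ![0, 0, 0, a, b] := by
  have h : decel γ = fun x => (2 - (3 * γ - 2) / 2) * (x 3 * x 3 + x 4 * x 4)
      + ((3 * γ - 2) / 2) * (1 - curv x) := by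
    funext x; simp only [decel]; ring
  rw [h]
  have h3 := hasFDerivAt_coord a b 3
  have h4 := hasFDerivAt_coord a b 4
  refine (((h3.fun_mul h3).add (h4.fun_mul h4)).const_mul _).add
    (((hasFDerivAt_const 1 _).sub (hasFDerivAt_curv a b)).const_mul _) |>.congr_fderiv ?_
  ext v
  simp
  ring

theorem decel_kasner (hab : a ^ 2 + b ^ 2 = 1) : decel γ ![0, 0, 0, a, b] = 2 := by
  simp only [decel, curv]
  simp
  linear_combination (2 - (3 * γ - 2) / 2) * hab

noncomputable def kasnerJacobian : (Fin 5 → ℝ) →L[ℝ] (Fin 5 → ℝ) :=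
  pi ![(2 - 4 * a) • proj 0,
    (2 + 2 * a + 2 * Real.sqrt 3 * b) • proj 1,
    (2 + 2 * a - 2 * Real.sqrt 3 * b) • proj 2,
    (3 * (2 - γ) * a) • (a • proj 3 + b • proj 4),
    (3 * (2 - γ) * b) • (a • proj 3 + b • proj 4)]

theorem hasFDerivAt_wainwrightHsu_kasner (hab : a ^ 2 + b ^ 2 = 1) :
    HasFDerivAt (wainwrightHsu γ) (kasnerJacobian γ a b) ![0, 0, 0, a, b] := by
  have hq := hasFDerivAt_decel γ a b
  have hq₂ := decel_kasner γ a b hab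
  have h (i : Fin 5) := hasFDerivAt_coord a b i
  rw [wainwrightHsu_eq, hasFDerivAt_pi']
  intro i
  fin_cases i
  · exact ((hq.sub ((h 3).const_mul 4)).mul_of_right_eq_zero (h 0) rfl).congr_fderiv
      (by ext v; simp [kasnerJacobian, hq₂])
  · exact (((hq.add ((h 3).const_mul 2)).add ((h 4).const_mul (2 * Real.sqrt 3)))
      |>.mul_of_right_eq_zero (h 1) rfl).congr_fderiv (by ext v; simp [kasnerJacobian, hq₂])
  · exact (((hq.add ((h 3).const_mul 2)).sub ((h 4).const_mul (2 * Real.sqrt 3)))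
      |>.mul_of_right_eq_zero (h 2) rfl).congr_fderiv (by ext v; simp [kasnerJacobian, hq₂])
  · exact (((hq.sub_const 2).mul_of_left_eq_zero (h 3) (by simp [hq₂])).sub
      ((hasFDerivAt_sPlus a b).const_mul 3)).congr_fderiv (by ext v; simp [kasnerJacobian]; ring)
  · exact (((hq.sub_const 2).mul_of_left_eq_zero (h 4) (by simp [hq₂])).sub
      ((hasFDerivAt_sMinus a b).const_mul 3)).congr_fderiv (by ext v; simp [kasnerJacobian]; ring)

theorem kasnerJacobian_e_zero : kasnerJacobian γ a b (e 0) = (2 - 4 * a) • e 0 := by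
  ext i; fin_cases i <;> simp [kasnerJacobian, e]

theorem kasnerJacobian_e_one :
    kasnerJacobian γ a b (e 1) = (2 + 2 * a + 2 * Real.sqrt 3 * b) • e 1 := by
  ext i; fin_cases i <;> simp [kasnerJacobian, e]

theorem kasnerJacobian_e_two :
    kasnerJacobian γ a b (e 2) = (2 + 2 * a - 2 * Real.sqrt 3 * b) • e 2 := by
  ext i; fin_cases i <;> simp [kasnerJacobian, e]

theorem kasnerJacobian_tangent : kasnerJacobian γ a b (-b • e 3 + a • e 4) = 0 := by
  ext i; fin_cases i <;> simp [kasnerJacobian, e] <;> ring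

theorem kasnerJacobian_radial (hab : a ^ 2 + b ^ 2 = 1) :
    kasnerJacobian γ a b (a • e 3 + b • e 4) = (3 * (2 - γ)) • (a • e 3 + b • e 4) := by
  ext i; fin_cases i <;> simp [kasnerJacobian, e]
  · linear_combination 3 * (2 - γ) * a * hab
  · linear_combination 3 * (2 - γ) * b * hab

end WainwrightHsu

open WainwrightHsu Module.End

theorem e_ne_zero (i : Fin 5) : e i ≠ 0 :=
  Pi.single_ne_zero_iff.mpr one_ne_zero

theorem smul_e_three_add_smul_e_four_ne_zero {a b : ℝ} (hab : a ^ 2 + b ^ 2 = 1) :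
    a • e 3 + b • e 4 ≠ 0 := by
  intro h
  have h3 := congrFun h 3
  have h4 := congrFun h 4
  simp [e] at h3 h4
  simp [h3, h4] at hab

/-- Eigenstructure of the linearization of the Wainwright–Hsu vector field at a
point `p = (0,0,0,σ₊,σ₋)` of the Kasner circle: the standard basis vectors
`e_{N₁}, e_{N₂}, e_{N₃}` are eigenvectors with eigenvalues `2-4σ₊`,
`2+2σ₊+2√3σ₋`, `2+2σ₊-2√3σ₋`; the vector `-σ₋e_{Σ₊}+σ₊e_{Σ₋}` tangential to the
Kasner circle is in the kernel; and `σ₊e_{Σ₊}+σ₋e_{Σ₋}` is an eigenvector with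
eigenvalue `3(2-γ)`. In particular `2-4σ₊`, `2+2σ₊+2√3σ₋`, `2+2σ₊-2√3σ₋`, `0`
and `3(2-γ)` are eigenvalues of `DX(p)`. -/
theorem kasner_linearization_eigenstructure (γ σp σm : ℝ)
    (hc : σp ^ 2 + σm ^ 2 = 1) :
    let p : Fin 5 → ℝ := ![0, 0, 0, σp, σm]
    let DX := fderiv ℝ (wainwrightHsu γ) p
    DX (e 0) = (2 - 4 * σp) • e 0 ∧
    DX (e 1) = (2 + 2 * σp + 2 * Real.sqrt 3 * σm) • e 1 ∧
    DX (e 2) = (2 + 2 * σp - 2 * Real.sqrt 3 * σm) • e 2 ∧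
    DX (-σm • e 3 + σp • e 4) = 0 ∧
    DX (σp • e 3 + σm • e 4) = (3 * (2 - γ)) • (σp • e 3 + σm • e 4) ∧
    Module.End.HasEigenvalue (DX : (Fin 5 → ℝ) →ₗ[ℝ] (Fin 5 → ℝ)) (2 - 4 * σp) ∧
    Module.End.HasEigenvalue (DX : (Fin 5 → ℝ) →ₗ[ℝ] (Fin 5 → ℝ))
      (2 + 2 * σp + 2 * Real.sqrt 3 * σm) ∧
    Module.End.HasEigenvalue (DX : (Fin 5 → ℝ) →ₗ[ℝ] (Fin 5 → ℝ))
      (2 + 2 * σp - 2 * Real.sqrt 3 * σm) ∧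
    Module.End.HasEigenvalue (DX : (Fin 5 → ℝ) →ₗ[ℝ] (Fin 5 → ℝ)) 0 ∧
    Module.End.HasEigenvalue (DX : (Fin 5 → ℝ) →ₗ[ℝ] (Fin 5 → ℝ)) (3 * (2 - γ)) := by
  intro p DX
  have hDX : DX = kasnerJacobian γ σp σm := (hasFDerivAt_wainwrightHsu_kasner γ σp σm hc).fderiv
  have h₀ := kasnerJacobian_e_zero γ σp σm
  have h₁ := kasnerJacobian_e_one γ σp σm
  have h₂ := kasnerJacobian_e_two γ σp σm
  have hτ := kasnerJacobian_tangent γ σp σm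
  have hρ := kasnerJacobian_radial γ σp σm hc
  have hτ₀ : -σm • e 3 + σp • e 4 ≠ 0 :=
    smul_e_three_add_smul_e_four_ne_zero (by linear_combination hc)
  rw [hDX]
  exact ⟨h₀, h₁, h₂, hτ, hρ,
    hasEigenvalue_of_apply_eq_smul h₀ (e_ne_zero 0),
    hasEigenvalue_of_apply_eq_smul h₁ (e_ne_zero 1),
    hasEigenvalue_of_apply_eq_smul h₂ (e_ne_zero 2),
    hasEigenvalue_of_apply_eq_smul (by rw [ContinuousLinearMap.coe_coe, hτ, zero_smul]) hτ₀,
    hasEigenvalue_of_apply_eq_smul hρ (smul_e_three_add_smul_e_four_ne_zero hc)⟩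
end

section
/- Let (Σ₊,Σ₋,Σ×,Σ₂,N₋,A): ℝ → ℝ⁶ be a differentiable solution of the Bianchi VI*_{-1/9} system. Then the constraint quantity g(t) = (Σ₊(t) + √3·Σ₋(t))·A(t) - Σ×(t)·N₋(t) satisfies the auxiliary equation g' = 2(q + Σ₊ - 1)·g; in particular the set {g = 0} is invariant. -/
/-!
Along the flow, `Σ₊' + √3 Σ₋' = (q - 2)(Σ₊ + √3 Σ₋) + 6 Σ×² - 8 N₋²`: since `√3² = 3`, the `Σ₂²` and
`A²` terms cancel. Inserting this into the product rule for `g`, the `Σ×² A` and `N₋² A` terms cancel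
against those coming from `(Σ× N₋)'`, and what is left is `2 (q + Σ₊ - 1) g`.
-/

open Real

theorem hasDerivAt_add_const_mul_mul_sub_mul {f₁ f₂ f₃ f₄ f₅ : ℝ → ℝ} {f₁' f₂' f₃' f₄' f₅' t : ℝ}
    (c : ℝ) (h₁ : HasDerivAt f₁ f₁' t) (h₂ : HasDerivAt f₂ f₂' t) (h₃ : HasDerivAt f₃ f₃' t)
    (h₄ : HasDerivAt f₄ f₄' t) (h₅ : HasDerivAt f₅ f₅' t) :
    HasDerivAt (fun s => (f₁ s + c * f₂ s) * f₃ s - f₄ s * f₅ s)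
      ((f₁' + c * f₂') * f₃ t + (f₁ t + c * f₂ t) * f₃' - (f₄' * f₅ t + f₄ t * f₅')) t :=
  ((h₁.add (h₂.const_mul c)).mul h₃).sub (h₄.mul h₅)

theorem bianchi_shear_plus_sqrt_three_mul_shear (q sp sm sx s2 nm a : ℝ) :
    ((q - 2) * sp + 3 * s2 ^ 2 - 2 * nm ^ 2 - 6 * a ^ 2)
      + √3 * ((q - 2) * sm - √3 * s2 ^ 2 + 2 * √3 * sx ^ 2 - 2 * √3 * nm ^ 2 + 2 * √3 * a ^ 2)
      = (q - 2) * (sp + √3 * sm) + 6 * sx ^ 2 - 8 * nm ^ 2 := by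
  have h3 : √3 ^ 2 = 3 := sq_sqrt (by norm_num)
  linear_combination (-s2 ^ 2 + 2 * sx ^ 2 - 2 * nm ^ 2 + 2 * a ^ 2) * h3

theorem bianchiB_constraint_evolution_general (Sp Sm Sx S2 Nm A : ℝ → ℝ)
    (hSp : Differentiable ℝ Sp) (hSm : Differentiable ℝ Sm)
    (hSx : Differentiable ℝ Sx)
    (hNm : Differentiable ℝ Nm) (hA : Differentiable ℝ A)
    (q : ℝ → ℝ)
    (hSp' : ∀ t, deriv Sp t
      = (q t - 2) * Sp t + 3 * S2 t ^ 2 - 2 * Nm t ^ 2 - 6 * A t ^ 2)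
    (hSm' : ∀ t, deriv Sm t
      = (q t - 2) * Sm t - Real.sqrt 3 * S2 t ^ 2 + 2 * Real.sqrt 3 * Sx t ^ 2
        - 2 * Real.sqrt 3 * Nm t ^ 2 + 2 * Real.sqrt 3 * A t ^ 2)
    (hSx' : ∀ t, deriv Sx t
      = (q t - 2 - 2 * Real.sqrt 3 * Sm t) * Sx t - 8 * Nm t * A t)
    (hNm' : ∀ t, deriv Nm t
      = (q t + 2 * Sp t + 2 * Real.sqrt 3 * Sm t) * Nm t + 6 * Sx t * A t)
    (hA' : ∀ t, deriv A t = (q t + 2 * Sp t) * A t) :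
    ∀ t, deriv (fun s => (Sp s + Real.sqrt 3 * Sm s) * A s - Sx s * Nm s) t
      = 2 * (q t + Sp t - 1) *
        ((Sp t + Real.sqrt 3 * Sm t) * A t - Sx t * Nm t) := by
  intro t
  rw [(hasDerivAt_add_const_mul_mul_sub_mul (√3) (hSp t).hasDerivAt (hSm t).hasDerivAt
    (hA t).hasDerivAt (hSx t).hasDerivAt (hNm t).hasDerivAt).deriv,
    hSp' t, hSm' t, hSx' t, hNm' t, hA' t]
  linear_combination
    A t * bianchi_shear_plus_sqrt_three_mul_shear (q t) (Sp t) (Sm t) (Sx t) (S2 t) (Nm t) (A t)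

/-- Let `(Σ₊,Σ₋,Σ×,Σ₂,N₋,A) : ℝ → ℝ⁶` be a differentiable solution of the
Bianchi `VI*₋₁/₉` system (with deceleration scalar `q`).  Then the constraint
quantity `g = (Σ₊ + √3·Σ₋)·A - Σ×·N₋` satisfies the auxiliary equation
`g' = 2(q + Σ₊ - 1)·g`. -/
theorem bianchiB_constraint_evolution (γ : ℝ) (Sp Sm Sx S2 Nm A : ℝ → ℝ)
    (hSp : Differentiable ℝ Sp) (hSm : Differentiable ℝ Sm)
    (hSx : Differentiable ℝ Sx) (hS2 : Differentiable ℝ S2)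
    (hNm : Differentiable ℝ Nm) (hA : Differentiable ℝ A)
    (q : ℝ → ℝ)
    (hq : ∀ t, q t = 2 * (Sp t ^ 2 + Sm t ^ 2 + S2 t ^ 2 + Sx t ^ 2)
      + (1 / 2) * (3 * γ - 2) *
        (1 - (Sp t ^ 2 + Sm t ^ 2 + S2 t ^ 2 + Sx t ^ 2) - Nm t ^ 2 - 4 * A t ^ 2))
    (hSp' : ∀ t, deriv Sp t
      = (q t - 2) * Sp t + 3 * S2 t ^ 2 - 2 * Nm t ^ 2 - 6 * A t ^ 2)
    (hSm' : ∀ t, deriv Sm t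
      = (q t - 2) * Sm t - Real.sqrt 3 * S2 t ^ 2 + 2 * Real.sqrt 3 * Sx t ^ 2
        - 2 * Real.sqrt 3 * Nm t ^ 2 + 2 * Real.sqrt 3 * A t ^ 2)
    (hSx' : ∀ t, deriv Sx t
      = (q t - 2 - 2 * Real.sqrt 3 * Sm t) * Sx t - 8 * Nm t * A t)
    (hS2' : ∀ t, deriv S2 t
      = (q t - 2 - 3 * Sp t + Real.sqrt 3 * Sm t) * S2 t)
    (hNm' : ∀ t, deriv Nm t
      = (q t + 2 * Sp t + 2 * Real.sqrt 3 * Sm t) * Nm t + 6 * Sx t * A t)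
    (hA' : ∀ t, deriv A t = (q t + 2 * Sp t) * A t) :
    ∀ t, deriv (fun s => (Sp s + Real.sqrt 3 * Sm s) * A s - Sx s * Nm s) t
      = 2 * (q t + Sp t - 1) *
        ((Sp t + Real.sqrt 3 * Sm t) * A t - Sx t * Nm t) :=
  bianchiB_constraint_evolution_general Sp Sm Sx S2 Nm A hSp hSm hSx hNm hA q hSp' hSm' hSx' hNm'
    hA'
end

section
/- Let u = (1+√5)/2 and let M be the 2×2 real matrix M = [[r₅r₄, r₅r₄r₂ + r₅r₁], [r₆r₄ + r₃, r₆r₄r₂ + r₆r₁ + r₃r₂]] with r₁ = (u+2)/2, r₂ = -(u²-1)/(2u), r₃ = 2u(u+1)/(2u+1), r₄ = -(u²-1)/(2u+1), r₅ = (2u+1)/(u(u+2)), r₆ = 2(u+1)/(u+2). Then trace(M) = u and det(M) = -u², and consequently the eigenvalues of M are u² = (3+√5)/2 and -1. -/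
/-!
With `u = φ` the golden ratio, `u² = u + 1` collapses the ratios: `r₂ = -1/2`, `r₃ = 2`,
`r₆ = 2 r₅` and `r₁ r₆ = u + 1 = u²`. For any ratios satisfying the first three relations the
passage matrix has trace `r₁ r₆ - 1` and determinant `-(r₁ r₆)`, so its characteristic
polynomial is `(X - r₁ r₆)(X + 1)`.
-/

open Matrix Polynomial

theorem Matrix.spectrum_fin_two_of_trace_det {K : Type*} [Field K]
    (A : Matrix (Fin 2) (Fin 2) K) {a b : K} (htr : A.trace = a + b) (hdet : A.det = a * b) :
    spectrum K A = {a, b} := by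
  ext x
  rw [mem_spectrum_iff_isRoot_charpoly, charpoly_fin_two, htr, hdet]
  simp only [IsRoot.def, eval_add, eval_sub, eval_mul, eval_pow, eval_C, eval_X,
    Set.mem_insert_iff, Set.mem_singleton_iff]
  rw [show x ^ 2 - (a + b) * x + a * b = (x - a) * (x - b) by ring, mul_eq_zero, sub_eq_zero,
    sub_eq_zero]

section PassageMatrix

variable {K : Type*} [Field K] (r₁ r₂ r₃ r₄ r₅ r₆ : K)

def passageMatrix : Matrix (Fin 2) (Fin 2) K :=
  !![r₅ * r₄, r₅ * r₄ * r₂ + r₅ * r₁;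
     r₆ * r₄ + r₃, r₆ * r₄ * r₂ + r₆ * r₁ + r₃ * r₂]

theorem passageMatrix_eq_mul :
    passageMatrix r₁ r₂ r₃ r₄ r₅ r₆ = !![r₅, 0; r₆, r₃] * !![r₄, r₁; 1, 0] * !![1, r₂; 0, 1] := by
  rw [passageMatrix, mul_fin_two, mul_fin_two]
  ring_nf

theorem det_passageMatrix : (passageMatrix r₁ r₂ r₃ r₄ r₅ r₆).det = -(r₁ * r₃ * r₅) := by
  rw [passageMatrix_eq_mul, det_mul, det_mul, det_fin_two_of, det_fin_two_of, det_fin_two_of]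
  ring

theorem trace_passageMatrix :
    (passageMatrix r₁ r₂ r₃ r₄ r₅ r₆).trace = r₄ * (r₅ + r₆ * r₂) + r₁ * r₆ + r₃ * r₂ := by
  rw [passageMatrix, trace_fin_two_of]
  ring

variable {r₁ r₂ r₃ r₄ r₅ r₆}

theorem trace_passageMatrix_of_relations (h₂ : 2 * r₂ = -1) (h₃ : r₃ = 2) (h₆ : r₆ = 2 * r₅) :
    (passageMatrix r₁ r₂ r₃ r₄ r₅ r₆).trace = r₁ * r₆ - 1 := by
  rw [trace_passageMatrix, h₃, h₆]
  linear_combination (r₄ * r₅ + 1) * h₂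

theorem det_passageMatrix_of_relations (h₃ : r₃ = 2) (h₆ : r₆ = 2 * r₅) :
    (passageMatrix r₁ r₂ r₃ r₄ r₅ r₆).det = -(r₁ * r₆) := by
  rw [det_passageMatrix, h₃, h₆]
  ring

theorem spectrum_passageMatrix_of_relations (h₂ : 2 * r₂ = -1) (h₃ : r₃ = 2) (h₆ : r₆ = 2 * r₅) :
    spectrum K (passageMatrix r₁ r₂ r₃ r₄ r₅ r₆) = {r₁ * r₆, -1} :=
  spectrum_fin_two_of_trace_det _
    (by rw [trace_passageMatrix_of_relations h₂ h₃ h₆]; ring)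
    (by rw [det_passageMatrix_of_relations h₃ h₆]; ring)

end PassageMatrix

open Matrix in
/-- The combined linear local passage at the 3-cycle in Bianchi `VI*₋₁/₉`:
with `u = (1+√5)/2` and the eigenvalue ratios `r₁,…,r₆`, the matrix
`M = [[r₅r₄, r₅r₄r₂ + r₅r₁], [r₆r₄ + r₃, r₆r₄r₂ + r₆r₁ + r₃r₂]]` has
`trace(M) = u` and `det(M) = -u²`, and consequently its eigenvalues are
`u² = (3+√5)/2` and `-1`. -/
theorem threeCycle_CLLP_matrix :
    let u : ℝ := (1 + Real.sqrt 5) / 2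
    let r₁ : ℝ := (u + 2) / 2
    let r₂ : ℝ := -((u ^ 2 - 1) / (2 * u))
    let r₃ : ℝ := 2 * u * (u + 1) / (2 * u + 1)
    let r₄ : ℝ := -((u ^ 2 - 1) / (2 * u + 1))
    let r₅ : ℝ := (2 * u + 1) / (u * (u + 2))
    let r₆ : ℝ := 2 * (u + 1) / (u + 2)
    let M : Matrix (Fin 2) (Fin 2) ℝ :=
      !![r₅ * r₄, r₅ * r₄ * r₂ + r₅ * r₁;
         r₆ * r₄ + r₃, r₆ * r₄ * r₂ + r₆ * r₁ + r₃ * r₂]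
    M.trace = u ∧ M.det = -u ^ 2 ∧ u ^ 2 = (3 + Real.sqrt 5) / 2 ∧
      spectrum ℝ M = {u ^ 2, -1} := by
  intro u r₁ r₂ r₃ r₄ r₅ r₆ M
  have hu : u ^ 2 = u + 1 := Real.goldenRatio_sq
  have hu₀ : 0 < u := Real.goldenRatio_pos
  have hu_sq : u ^ 2 = (3 + √5) / 2 := by rw [hu]; ring
  clear_value u
  have h₂ : 2 * r₂ = -1 := by
    change 2 * -((u ^ 2 - 1) / (2 * u)) = -1
    field_simp
    linear_combination -hu
  have h₃ : r₃ = 2 := by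
    change 2 * u * (u + 1) / (2 * u + 1) = 2
    field_simp
    linear_combination hu
  have h₆ : r₆ = 2 * r₅ := by
    change 2 * (u + 1) / (u + 2) = 2 * ((2 * u + 1) / (u * (u + 2)))
    field_simp
    linear_combination hu
  have h₁₆ : r₁ * r₆ = u ^ 2 := by
    change (u + 2) / 2 * (2 * (u + 1) / (u + 2)) = u ^ 2
    field_simp
    linear_combination -hu
  have hM : M = passageMatrix r₁ r₂ r₃ r₄ r₅ r₆ := rfl
  rw [hM, trace_passageMatrix_of_relations h₂ h₃ h₆, det_passageMatrix_of_relations h₃ h₆,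
    spectrum_passageMatrix_of_relations h₂ h₃ h₆, h₁₆]
  exact ⟨by rw [hu]; ring, rfl, hu_sq, rfl⟩
end

section
/- Let M = (1/100)·[[26754, 11078],[59516, 24751]] be the matrix of the combined linear local passage at the classic 18-cycle. All entries of M are positive and each row sum of M is strictly greater than 1; consequently, for every x = (x₁,x₂) ∈ ℝ² with x₁ < 0 and x₂ < 0, both components of Mx are negative and satisfy (Mx)ᵢ ≤ max(x₁,x₂) for i = 1,2. In particular, in logarithmic coordinates the combined linear local passage at the classic 18-cycle maps the negative quadrant into itself and moves each point at least as far from the origin, i.e., it is a contraction toward the heteroclinic cycle in the original variables. -/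
/-! Writing `(M x)ᵢ = ∑ⱼ Mᵢⱼ xⱼ`, positivity of the entries makes `(M x)ᵢ` a positive combination of
negative numbers, and bounding every `xⱼ` by `c = max xⱼ ≤ 0` gives `(M x)ᵢ ≤ (∑ⱼ Mᵢⱼ) c ≤ c`,
the last step because the row sum is at least `1` and `c` is nonpositive. -/

namespace Matrix

variable {R m n : Type*} [Ring R] [PartialOrder R] [Fintype n]
  {M : Matrix m n R} {x : n → R}

theorem mulVec_apply_neg_of_pos_of_neg [Nonempty n] [IsStrictOrderedRing R]
    (hM : ∀ i j, 0 < M i j) (hx : ∀ j, x j < 0) (i : m) : (M *ᵥ x) i < 0 :=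
  Finset.sum_neg (fun j _ => mul_neg_of_pos_of_neg (hM i j) (hx j)) Finset.univ_nonempty

theorem mulVec_apply_le_of_one_le_sum [IsOrderedRing R] {i : m} {c : R} (hM : ∀ j, 0 ≤ M i j)
    (hrow : 1 ≤ ∑ j, M i j) (hc : c ≤ 0) (hx : ∀ j, x j ≤ c) : (M *ᵥ x) i ≤ c :=
  calc (M *ᵥ x) i = ∑ j, M i j * x j := rfl
    _ ≤ ∑ j, M i j * c := Finset.sum_le_sum fun j _ => mul_le_mul_of_nonneg_left (hx j) (hM j)
    _ = (∑ j, M i j) * c := Finset.sum_mul .. |>.symm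
    _ ≤ 1 * c := mul_le_mul_of_nonpos_right hrow hc
    _ = c := one_mul c

end Matrix

open Matrix in
/-- The matrix `M = (1/100)·[[26754, 11078],[59516, 24751]]` of the combined
linear local passage at the classic 18-cycle has positive entries and row sums
strictly greater than `1`; consequently, for every `x = (x₁,x₂)` with
`x₁ < 0` and `x₂ < 0`, both components of `Mx` are negative and satisfy
`(Mx)ᵢ ≤ max(x₁,x₂)`: in logarithmic coordinates the combined linear local
passage maps the negative quadrant into itself and moves each point at least
as far from the origin, i.e. it is a contraction toward the heteroclinic
cycle in the original variables. -/
theorem classic18Cycle_contraction :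
    let M : Matrix (Fin 2) (Fin 2) ℝ :=
      (1 / 100 : ℝ) • !![26754, 11078; 59516, 24751]
    (∀ i j : Fin 2, 0 < M i j) ∧
    (∀ i : Fin 2, 1 < M i 0 + M i 1) ∧
    (∀ x : Fin 2 → ℝ, x 0 < 0 → x 1 < 0 →
      (M.mulVec x 0 < 0 ∧ M.mulVec x 1 < 0) ∧
      (M.mulVec x 0 ≤ max (x 0) (x 1) ∧ M.mulVec x 1 ≤ max (x 0) (x 1))) := by
  intro M
  have hpos : ∀ i j, 0 < M i j := by
    intro i j
    fin_cases i <;> fin_cases j <;> norm_num [M]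
  have hrow : ∀ i, 1 < M i 0 + M i 1 := by
    intro i
    fin_cases i <;> norm_num [M]
  refine ⟨hpos, hrow, fun x h0 h1 => ?_⟩
  have hneg : ∀ j, x j < 0 := Fin.forall_fin_two.2 ⟨h0, h1⟩
  have hle_max : ∀ j, x j ≤ max (x 0) (x 1) :=
    Fin.forall_fin_two.2 ⟨le_max_left .., le_max_right ..⟩
  have hle (i : Fin 2) : M.mulVec x i ≤ max (x 0) (x 1) :=
    mulVec_apply_le_of_one_le_sum (fun j => (hpos i j).le)
      (by rw [Fin.sum_univ_two]; exact (hrow i).le) (max_lt h0 h1).le hle_max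
  exact ⟨⟨mulVec_apply_neg_of_pos_of_neg hpos hneg 0, mulVec_apply_neg_of_pos_of_neg hpos hneg 1⟩,
    hle 0, hle 1⟩
end
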